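/- arXiv:1701.02910 — 2 statements merged into one kernel-verified Lean document; each statement's English description precedes it below -/
import Mathlib

section
/- Let b be a prime, let α, β > 1 be reals, let θ = min(α,β), and let κ > 1/θ. Let 0 < γ_j^{(1)} ≤ 1 and 0 < γ_j^{(2)} ≤ 1 for all j. Then for every real M ≥ 1 and all s,t ∈ ℕ, the set A_M = {(k,l) ∈ ℕ^s × ℤ^t : (ρ_{α,γ^{(1)}}(k))^{-1}·(r_{β,γ^{(2)}}(l))^{-1} ≤ M} is finite and its cardinality satisfies |A_M| ≤ M^κ · ∏_{j=1}^s (1 + 2ζ(θκ)(b^α γ_j^{(1)})^κ) · ∏_{j=1}^t (1 + 2ζ(θκ)(γ_j^{(2)})^κ), where ζ denotes the Riemann zeta function. -/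
open scoped BigOperators

/-- The Walsh-space decay function ρ_{α,γ} : ℕ → ℝ,
    ρ_{α,γ}(0) = 1 and ρ_{α,γ}(k) = γ·b^{-α·⌊log_b k⌋} for k ≥ 1. -/
noncomputable def rho (b : ℕ) (α γ : ℝ) (k : ℕ) : ℝ :=
  if k = 0 then 1 else γ * (b : ℝ) ^ (-(α * (Nat.log b k : ℝ)))

/-- The Korobov-space decay function r_{β,γ} : ℤ → ℝ,
    r_{β,γ}(0) = 1 and r_{β,γ}(l) = γ·|l|^{-β} for l ≠ 0. -/
noncomputable def rK (β γ : ℝ) (l : ℤ) : ℝ :=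
  if l = 0 then 1 else γ * |(l : ℝ)| ^ (-β)

/-- The Riemann zeta function, viewed as a real-valued function of a real argument. -/
noncomputable def zetaR (x : ℝ) : ℝ := (riemannZeta (x : ℂ)).re

/-- The set A_M = {(k,l) ∈ ℕ^s × ℤ^t : (ρ_{α,γ^{(1)}}(k))⁻¹·(r_{β,γ^{(2)}}(l))⁻¹ ≤ M}. -/
def AM (b : ℕ) (α β : ℝ) (γ1 γ2 : ℕ → ℝ) (s t : ℕ) (M : ℝ) :
    Set ((Fin s → ℕ) × (Fin t → ℤ)) :=
  {p | (∏ j : Fin s, rho b α (γ1 j) (p.1 j))⁻¹ * (∏ j : Fin t, rK β (γ2 j) (p.2 j))⁻¹ ≤ M}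

open scoped ENNReal

lemma zetaR_eq_tsum {x : ℝ} (hx : 1 < x) : zetaR x = ∑' n : ℕ, 1 / (n : ℝ) ^ x := by
  have hsum : Summable fun n : ℕ => 1 / (n : ℝ) ^ x := (Real.summable_one_div_nat_rpow).2 hx
  have hkey : ∀ n : ℕ, (1 / (n : ℂ) ^ (x : ℂ)) = ((1 / (n : ℝ) ^ x : ℝ) : ℂ) := by
    intro n
    rw [Complex.ofReal_div, Complex.ofReal_one, Complex.ofReal_cpow (Nat.cast_nonneg n),
      Complex.ofReal_natCast]
  have hs2 : Summable fun n : ℕ => 1 / (n : ℂ) ^ (x : ℂ) := by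
    simp only [hkey]; exact Complex.summable_ofReal.2 hsum
  rw [zetaR, zeta_eq_tsum_one_div_nat_cpow (by simpa using hx), Complex.re_tsum hs2]
  congr 1; ext n; rw [hkey, Complex.ofReal_re]

lemma zetaR_nonneg {x : ℝ} (hx : 1 < x) : 0 ≤ zetaR x := by
  rw [zetaR_eq_tsum hx]
  exact tsum_nonneg fun n => by positivity

lemma summable_shift {c : ℝ} (hc : 1 < c) :
    Summable fun n : ℕ => ((n : ℝ) + 1) ^ (-c) := by
  have hsum : Summable fun n : ℕ => 1 / (n : ℝ) ^ c := (Real.summable_one_div_nat_rpow).2 hc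
  have := hsum.comp_injective Nat.succ_injective
  refine this.congr fun n => ?_
  simp only [Function.comp]
  rw [Real.rpow_neg (by positivity), ← one_div]
  push_cast
  ring_nf

lemma zetaR_shift {c : ℝ} (hc : 1 < c) : zetaR c = ∑' n : ℕ, ((n : ℝ) + 1) ^ (-c) := by
  have hsum : Summable fun n : ℕ => 1 / (n : ℝ) ^ c := (Real.summable_one_div_nat_rpow).2 hc
  rw [zetaR_eq_tsum hc, Summable.tsum_eq_zero_add hsum]
  have h0 : 1 / (0 : ℝ) ^ c = 0 := by
    rw [Real.zero_rpow (by linarith), div_zero]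
  simp only [Nat.cast_zero, h0, zero_add]
  congr 1; funext n
  rw [Real.rpow_neg (by positivity), ← one_div]
  push_cast
  ring_nf

lemma tail_le {c A : ℝ} (hc : 1 < c) (hA : 0 ≤ A)
    (g : ℕ → ℝ) (hg : ∀ n, g n ≤ A * ((n : ℝ) + 1) ^ (-c)) :
    ∑' n : ℕ, ENNReal.ofReal (g n) ≤ ENNReal.ofReal (zetaR c * A) := by
  calc ∑' n : ℕ, ENNReal.ofReal (g n)
      ≤ ∑' n : ℕ, ENNReal.ofReal (A * ((n : ℝ) + 1) ^ (-c)) :=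
        ENNReal.tsum_le_tsum fun n => ENNReal.ofReal_le_ofReal (hg n)
    _ = ∑' n : ℕ, ENNReal.ofReal A * ENNReal.ofReal (((n : ℝ) + 1) ^ (-c)) := by
        congr 1; funext n; rw [ENNReal.ofReal_mul hA]
    _ = ENNReal.ofReal A * ENNReal.ofReal (∑' n : ℕ, ((n : ℝ) + 1) ^ (-c)) := by
        rw [ENNReal.tsum_mul_left,
          ENNReal.ofReal_tsum_of_nonneg (fun n => by positivity) (summable_shift hc)]
    _ = ENNReal.ofReal (zetaR c * A) := by
        rw [← ENNReal.ofReal_mul hA, mul_comm, zetaR_shift hc]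

open scoped ENNReal in
lemma tsum_pi_fin {X : Type*} : ∀ (n : ℕ) (f : Fin n → X → ℝ≥0∞),
    ∑' x : Fin n → X, ∏ i, f i (x i) = ∏ i, ∑' k, f i k := by
  intro n
  induction n with
  | zero =>
    intro f
    simp only [Finset.univ_eq_empty, Finset.prod_empty]
    exact tsum_eq_single (fun i => i.elim0) fun b hb =>
      (hb (funext fun i => i.elim0)).elim
  | succ n ih =>
    intro f
    rw [← (Fin.consEquiv (fun _ : Fin (n+1) => X)).tsum_eq, Fin.prod_univ_succ]
    have : ∀ p : X × (Fin n → X), ∏ i, f i ((Fin.consEquiv (fun _ : Fin (n+1) => X)) p i)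
        = f 0 p.1 * ∏ i : Fin n, f i.succ (p.2 i) := by
      intro p
      rw [Fin.prod_univ_succ]
      simp [Fin.consEquiv]
    rw [tsum_congr this, ENNReal.tsum_prod']
    simp only [ENNReal.tsum_mul_right, ENNReal.tsum_mul_left]
    rw [ih fun i => f i.succ]

lemma rho_pos {b : ℕ} (hb : 0 < b) {α γ : ℝ} (hγ : 0 < γ) (k : ℕ) :
    0 < rho b α γ k := by
  rw [rho]
  split
  · exact one_pos
  · have hB : (0 : ℝ) < b := by exact_mod_cast hb
    positivity

lemma rK_pos {β γ : ℝ} (hγ : 0 < γ) (l : ℤ) : 0 < rK β γ l := by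
  rw [rK]
  split
  · exact one_pos
  · rename_i hl
    have : (0 : ℝ) < |(l : ℝ)| := by
      have : (l : ℝ) ≠ 0 := Int.cast_ne_zero.2 hl
      positivity
    positivity

set_option maxHeartbeats 1000000 in
lemma rho_le {b : ℕ} (hb : 1 < b) {α γ : ℝ} (hα : 0 < α) (hγ : 0 < γ) (n : ℕ) :
    rho b α γ (n + 1) ≤ (b : ℝ) ^ α * γ * ((n : ℝ) + 1) ^ (-α) := by
  have hB : (1 : ℝ) < (b : ℝ) := by exact_mod_cast hb
  have hB0 : (0 : ℝ) < b := by linarith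
  set L := Nat.log b (n + 1) with hL
  have hk : (((n : ℝ)) + 1) ≤ (b : ℝ) ^ ((L : ℝ) + 1) := by
    have h2 : ((n + 1 : ℕ) : ℝ) ≤ ((b ^ (L + 1) : ℕ) : ℝ) :=
      Nat.cast_le.2 (Nat.lt_pow_succ_log_self hb (n + 1)).le
    push_cast at h2
    rw [show ((L : ℝ) + 1) = ((L + 1 : ℕ) : ℝ) by push_cast; ring, Real.rpow_natCast]
    exact_mod_cast h2
  have key : (b : ℝ) ^ (-(α * (L : ℝ))) = (b : ℝ) ^ α * ((b : ℝ) ^ ((L : ℝ) + 1)) ^ (-α) := by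
    rw [← Real.rpow_mul hB0.le, ← Real.rpow_add hB0]
    ring_nf
  rw [rho, if_neg (Nat.succ_ne_zero n), ← hL, key]
  have hmono : ((b : ℝ) ^ ((L : ℝ) + 1)) ^ (-α) ≤ ((n : ℝ) + 1) ^ (-α) :=
    Real.rpow_le_rpow_of_nonpos (by positivity) hk (by linarith)
  calc γ * ((b : ℝ) ^ α * ((b : ℝ) ^ ((L : ℝ) + 1)) ^ (-α))
      ≤ γ * ((b : ℝ) ^ α * ((n : ℝ) + 1) ^ (-α)) := by
        apply mul_le_mul_of_nonneg_left _ hγ.le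
        exact mul_le_mul_of_nonneg_left hmono (by positivity)
    _ = (b : ℝ) ^ α * γ * ((n : ℝ) + 1) ^ (-α) := by ring

set_option maxHeartbeats 1000000 in
lemma rho_pow_le {b : ℕ} (hb : 1 < b) {α γ κ c : ℝ} (hα : 0 < α) (hγ : 0 < γ)
    (hκ : 0 ≤ κ) (hc : c ≤ α * κ) (n : ℕ) :
    rho b α γ (n + 1) ^ κ ≤ ((b : ℝ) ^ α * γ) ^ κ * ((n : ℝ) + 1) ^ (-c) := by
  have hB0 : (0 : ℝ) < b := by exact_mod_cast Nat.lt_of_lt_of_le Nat.zero_lt_one hb.le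
  have h1 : rho b α γ (n + 1) ^ κ ≤ ((b : ℝ) ^ α * γ * ((n : ℝ) + 1) ^ (-α)) ^ κ :=
    Real.rpow_le_rpow (rho_pos (by omega) hγ (n + 1)).le (rho_le hb hα hγ n) hκ
  refine h1.trans ?_
  rw [Real.mul_rpow (by positivity) (by positivity), ← Real.rpow_mul (by positivity)]
  apply mul_le_mul_of_nonneg_left _ (by positivity)
  exact Real.rpow_le_rpow_of_exponent_le (by simp) (by nlinarith)

set_option maxHeartbeats 1000000 in
lemma rK_pow_le {β γ κ c : ℝ} (hβ : 0 < β) (hγ : 0 < γ) (hκ : 0 ≤ κ) (hc : c ≤ β * κ)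
    {l : ℤ} (hl : l ≠ 0) : rK β γ l ^ κ ≤ γ ^ κ * |(l : ℝ)| ^ (-c) := by
  have h1 : (1 : ℝ) ≤ |(l : ℝ)| := by
    rw [← Int.cast_abs]
    exact_mod_cast Int.one_le_abs (by omega)
  rw [rK, if_neg hl, Real.mul_rpow hγ.le (by positivity), ← Real.rpow_mul (abs_nonneg _)]
  apply mul_le_mul_of_nonneg_left _ (by positivity)
  exact Real.rpow_le_rpow_of_exponent_le h1 (by nlinarith)

lemma sumNat {b : ℕ} (hb : 1 < b) {α γ κ c : ℝ} (hα : 0 < α) (hγ : 0 < γ)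
    (hκ : 0 ≤ κ) (hc : 1 < c) (hcα : c ≤ α * κ) :
    ∑' k : ℕ, ENNReal.ofReal (rho b α γ k ^ κ) ≤
      ENNReal.ofReal (1 + 2 * zetaR c * ((b : ℝ) ^ α * γ) ^ κ) := by
  have hB0 : (0 : ℝ) < b := by exact_mod_cast Nat.lt_of_lt_of_le Nat.zero_lt_one hb.le
  set C := ((b : ℝ) ^ α * γ) ^ κ with hC
  have hC0 : 0 ≤ C := by positivity
  have hz : 0 ≤ zetaR c := zetaR_nonneg hc
  rw [tsum_eq_zero_add' ENNReal.summable]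
  have h0 : ENNReal.ofReal (rho b α γ 0 ^ κ) = 1 := by
    rw [rho]; simp
  rw [h0]
  have htail : ∑' n : ℕ, ENNReal.ofReal (rho b α γ (n + 1) ^ κ) ≤
      ENNReal.ofReal (zetaR c * C) :=
    tail_le hc hC0 _ (fun n => rho_pow_le hb hα hγ hκ hcα n)
  calc 1 + ∑' n : ℕ, ENNReal.ofReal (rho b α γ (n + 1) ^ κ)
      ≤ 1 + ENNReal.ofReal (zetaR c * C) := add_le_add_right htail 1
    _ = ENNReal.ofReal (1 + zetaR c * C) := by
        rw [ENNReal.ofReal_add (by norm_num) (by positivity), ENNReal.ofReal_one]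
    _ ≤ ENNReal.ofReal (1 + 2 * zetaR c * C) := by
        apply ENNReal.ofReal_le_ofReal; nlinarith

lemma sumInt {β γ κ c : ℝ} (hβ : 0 < β) (hγ : 0 < γ) (hκ : 0 ≤ κ) (hc : 1 < c)
    (hcβ : c ≤ β * κ) :
    ∑' l : ℤ, ENNReal.ofReal (rK β γ l ^ κ) ≤
      ENNReal.ofReal (1 + 2 * zetaR c * γ ^ κ) := by
  have hz : 0 ≤ zetaR c := zetaR_nonneg hc
  have hγκ : 0 ≤ γ ^ κ := by positivity
  rw [tsum_of_nat_of_neg_add_one ENNReal.summable ENNReal.summable]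
  have hpos : ∑' n : ℕ, ENNReal.ofReal (rK β γ ((n : ℤ)) ^ κ) ≤
      1 + ENNReal.ofReal (zetaR c * γ ^ κ) := by
    rw [tsum_eq_zero_add' ENNReal.summable]
    have h0 : ENNReal.ofReal (rK β γ ((0 : ℕ) : ℤ) ^ κ) = 1 := by
      norm_num [rK]
    rw [h0]
    refine add_le_add_right (tail_le hc hγκ _ fun n => ?_) 1
    have := rK_pow_le hβ hγ hκ hcβ (l := ((n : ℤ) + 1)) (by omega)
    refine le_of_le_of_eq this ?_
    congr 1
    push_cast
    rw [abs_of_nonneg (by positivity)]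
  have hneg : ∑' n : ℕ, ENNReal.ofReal (rK β γ (-((n : ℤ) + 1)) ^ κ) ≤
      ENNReal.ofReal (zetaR c * γ ^ κ) := by
    refine tail_le hc hγκ _ fun n => ?_
    have := rK_pow_le hβ hγ hκ hcβ (l := (-((n : ℤ) + 1))) (by omega)
    refine le_of_le_of_eq this ?_
    congr 1
    push_cast
    rw [abs_neg, abs_of_nonneg (by positivity)]
  calc (∑' n : ℕ, ENNReal.ofReal (rK β γ ((n : ℤ)) ^ κ)) +
        ∑' n : ℕ, ENNReal.ofReal (rK β γ (-((n : ℤ) + 1)) ^ κ)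
      ≤ (1 + ENNReal.ofReal (zetaR c * γ ^ κ)) + ENNReal.ofReal (zetaR c * γ ^ κ) :=
        add_le_add hpos hneg
    _ = ENNReal.ofReal (1 + 2 * zetaR c * γ ^ κ) := by
        rw [add_assoc, ← ENNReal.ofReal_add (mul_nonneg hz hγκ) (mul_nonneg hz hγκ),
          ENNReal.ofReal_add (by norm_num : (0:ℝ) ≤ 1)
            (by nlinarith : (0:ℝ) ≤ 2 * zetaR c * γ ^ κ), ENNReal.ofReal_one]
        congr 1
        ring

set_option maxHeartbeats 1000000 in
theorem stmt_0 (b : ℕ) (hb : b.Prime) (α β : ℝ) (hα : 1 < α) (hβ : 1 < β)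
    (θ : ℝ) (hθ : θ = min α β) (κ : ℝ) (hκ : 1 / θ < κ)
    (γ1 γ2 : ℕ → ℝ) (hγ1 : ∀ j, 0 < γ1 j ∧ γ1 j ≤ 1) (hγ2 : ∀ j, 0 < γ2 j ∧ γ2 j ≤ 1)
    (M : ℝ) (hM : 1 ≤ M) (s t : ℕ) :
    (AM b α β γ1 γ2 s t M).Finite ∧
      ((AM b α β γ1 γ2 s t M).ncard : ℝ) ≤
        M ^ κ * (∏ j : Fin s, (1 + 2 * zetaR (θ * κ) * ((b : ℝ) ^ α * γ1 j) ^ κ)) *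
          ∏ j : Fin t, (1 + 2 * zetaR (θ * κ) * (γ2 j) ^ κ) := by
  have hb1 : 1 < b := hb.one_lt
  have hB0 : (0 : ℝ) < b := by exact_mod_cast Nat.lt_of_lt_of_le Nat.zero_lt_one hb1.le
  have hθ1 : 1 < θ := by rw [hθ]; exact lt_min hα hβ
  have hθ0 : 0 < θ := by linarith
  have hκ0 : 0 < κ := lt_trans (by positivity) hκ
  set c := θ * κ with hc
  have hc1 : 1 < c := by
    rw [hc]
    calc (1 : ℝ) = θ * (1 / θ) := by field_simp
    _ < θ * κ := by apply mul_lt_mul_of_pos_left hκ hθ0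
  have hcα : c ≤ α * κ := by
    have : θ ≤ α := by rw [hθ]; exact min_le_left _ _
    rw [hc]; nlinarith
  have hcβ : c ≤ β * κ := by
    have : θ ≤ β := by rw [hθ]; exact min_le_right _ _
    rw [hc]; nlinarith
  have hz : 0 ≤ zetaR c := zetaR_nonneg hc1
  -- the summable majorant
  set F : (Fin s → ℕ) × (Fin t → ℤ) → ℝ≥0∞ := fun p =>
    (∏ j : Fin s, ENNReal.ofReal (rho b α (γ1 j) (p.1 j) ^ κ)) *
      ∏ j : Fin t, ENNReal.ofReal (rK β (γ2 j) (p.2 j) ^ κ) with hF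
  set P1 : ℝ := ∏ j : Fin s, (1 + 2 * zetaR c * ((b : ℝ) ^ α * γ1 j) ^ κ) with hP1
  set P2 : ℝ := ∏ j : Fin t, (1 + 2 * zetaR c * (γ2 j) ^ κ) with hP2
  have hfac1 : ∀ j : ℕ, 0 ≤ 1 + 2 * zetaR c * ((b : ℝ) ^ α * γ1 j) ^ κ := fun j => by
    have h := Real.rpow_nonneg (mul_nonneg (Real.rpow_nonneg hB0.le α) (hγ1 j).1.le) κ
    nlinarith
  have hfac2 : ∀ j : ℕ, 0 ≤ 1 + 2 * zetaR c * (γ2 j) ^ κ := fun j => by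
    have h := Real.rpow_nonneg (hγ2 j).1.le κ
    nlinarith
  have hP1nn : 0 ≤ P1 := Finset.prod_nonneg fun j _ => hfac1 j
  have hP2nn : 0 ≤ P2 := Finset.prod_nonneg fun j _ => hfac2 j
  have hT : ∑' p, F p ≤ ENNReal.ofReal (P1 * P2) := by
    have hsplit : ∑' p, F p =
        (∑' x : Fin s → ℕ, ∏ j : Fin s, ENNReal.ofReal (rho b α (γ1 j) (x j) ^ κ)) *
          ∑' y : Fin t → ℤ, ∏ j : Fin t, ENNReal.ofReal (rK β (γ2 j) (y j) ^ κ) := by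
      rw [hF, ENNReal.tsum_prod']
      simp only [ENNReal.tsum_mul_left, ENNReal.tsum_mul_right]
    have e1 := tsum_pi_fin s (fun j k => ENNReal.ofReal (rho b α (γ1 j) k ^ κ))
    have e2 := tsum_pi_fin t (fun j l => ENNReal.ofReal (rK β (γ2 j) l ^ κ))
    rw [hsplit, e1, e2]
    calc (∏ j : Fin s, ∑' k : ℕ, ENNReal.ofReal (rho b α (γ1 j) k ^ κ)) *
          ∏ j : Fin t, ∑' l : ℤ, ENNReal.ofReal (rK β (γ2 j) l ^ κ)
        ≤ (∏ j : Fin s, ENNReal.ofReal (1 + 2 * zetaR c * ((b : ℝ) ^ α * γ1 j) ^ κ)) *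
            ∏ j : Fin t, ENNReal.ofReal (1 + 2 * zetaR c * (γ2 j) ^ κ) := by
          apply mul_le_mul'
          · exact Finset.prod_le_prod' fun j _ =>
              sumNat hb1 (by linarith) (hγ1 j).1 hκ0.le hc1 hcα
          · exact Finset.prod_le_prod' fun j _ =>
              sumInt (by linarith) (hγ2 j).1 hκ0.le hc1 hcβ
      _ = ENNReal.ofReal (P1 * P2) := by
          rw [← ENNReal.ofReal_prod_of_nonneg (fun (j : Fin s) _ => hfac1 j),
            ← ENNReal.ofReal_prod_of_nonneg (fun (j : Fin t) _ => hfac2 j),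
            ← ENNReal.ofReal_mul hP1nn]
  set ε : ℝ≥0∞ := ENNReal.ofReal (M ^ (-κ)) with hε
  have hM0 : (0 : ℝ) < M := by linarith
  have hεpos : ε ≠ 0 := by
    rw [hε]
    simp only [ne_eq, ENNReal.ofReal_eq_zero, not_le]
    positivity
  have hmem : ∀ p ∈ AM b α β γ1 γ2 s t M, ε ≤ F p := by
    intro p hp
    have hx : 0 < ∏ j : Fin s, rho b α (γ1 j) (p.1 j) :=
      Finset.prod_pos fun j _ => rho_pos (Nat.lt_of_lt_of_le Nat.zero_lt_one hb1.le) (hγ1 j).1 _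
    have hy : 0 < ∏ j : Fin t, rK β (γ2 j) (p.2 j) :=
      Finset.prod_pos fun j _ => rK_pos (hγ2 j).1 _
    have hAM : ((∏ j : Fin s, rho b α (γ1 j) (p.1 j)) *
        ∏ j : Fin t, rK β (γ2 j) (p.2 j))⁻¹ ≤ M := by
      rw [mul_inv]; exact hp
    have hxy : M⁻¹ ≤ (∏ j : Fin s, rho b α (γ1 j) (p.1 j)) *
        ∏ j : Fin t, rK β (γ2 j) (p.2 j) :=
      (inv_le_comm₀ hM0 (by positivity)).2 hAM
    have e1 : (∏ j : Fin s, rho b α (γ1 j) (p.1 j) ^ κ)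
        = (∏ j : Fin s, rho b α (γ1 j) (p.1 j)) ^ κ :=
      Real.finset_prod_rpow Finset.univ (fun j : Fin s => rho b α (γ1 j) (p.1 j))
        (fun j _ => (rho_pos (Nat.lt_of_lt_of_le Nat.zero_lt_one hb1.le) (hγ1 j).1 _).le) κ
    have e2 : (∏ j : Fin t, rK β (γ2 j) (p.2 j) ^ κ)
        = (∏ j : Fin t, rK β (γ2 j) (p.2 j)) ^ κ :=
      Real.finset_prod_rpow Finset.univ (fun j : Fin t => rK β (γ2 j) (p.2 j))
        (fun j _ => (rK_pos (hγ2 j).1 _).le) κ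
    have hFval : F p = ENNReal.ofReal
        (((∏ j : Fin s, rho b α (γ1 j) (p.1 j)) *
          ∏ j : Fin t, rK β (γ2 j) (p.2 j)) ^ κ) := by
      rw [hF, Real.mul_rpow hx.le hy.le, ← e1, ← e2,
        ENNReal.ofReal_mul (Finset.prod_nonneg fun (j : Fin s) _ =>
          Real.rpow_nonneg (rho_pos (Nat.lt_of_lt_of_le Nat.zero_lt_one hb1.le) (hγ1 j).1 _).le κ),
        ENNReal.ofReal_prod_of_nonneg (fun (j : Fin s) _ =>
          Real.rpow_nonneg (rho_pos (Nat.lt_of_lt_of_le Nat.zero_lt_one hb1.le) (hγ1 j).1 _).le κ),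
        ENNReal.ofReal_prod_of_nonneg (fun (j : Fin t) _ =>
          Real.rpow_nonneg (rK_pos (hγ2 j).1 _).le κ)]
    rw [hFval, hε]
    apply ENNReal.ofReal_le_ofReal
    have : M ^ (-κ) = (M⁻¹) ^ κ := by
      rw [Real.rpow_neg hM0.le, ← Real.inv_rpow hM0.le]
    rw [this]
    exact Real.rpow_le_rpow (by positivity) hxy hκ0.le
  have hTne : ∑' p, F p ≠ ⊤ := (lt_of_le_of_lt hT ENNReal.ofReal_lt_top).ne
  have hsup : AM b α β γ1 γ2 s t M ⊆ {p | ε ≤ F p} := fun p hp => hmem p hp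
  have hfin : (AM b α β γ1 γ2 s t M).Finite :=
    Set.Finite.subset (ENNReal.finite_const_le_of_tsum_ne_top hTne hεpos) hsup
  refine ⟨hfin, ?_⟩
  -- cardinality bound
  set S := hfin.toFinset with hS
  have hcard : (S.card : ℝ≥0∞) * ε ≤ ENNReal.ofReal (P1 * P2) := by
    calc (S.card : ℝ≥0∞) * ε = ∑ _p ∈ S, ε := by
          rw [Finset.sum_const, nsmul_eq_mul]
      _ ≤ ∑ p ∈ S, F p := Finset.sum_le_sum fun p hp =>
          hmem p ((Set.Finite.mem_toFinset hfin).1 hp)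
      _ ≤ ∑' p, F p := ENNReal.sum_le_tsum S
      _ ≤ ENNReal.ofReal (P1 * P2) := hT
  have hreal : (S.card : ℝ) * M ^ (-κ) ≤ P1 * P2 := by
    have h1 := ENNReal.toReal_mono (by simp) hcard
    rw [ENNReal.toReal_mul, hε, ENNReal.toReal_ofReal (by positivity),
      ENNReal.toReal_ofReal (by positivity)] at h1
    simpa using h1
  have hninv : M ^ (-κ) * M ^ κ = 1 := by
    rw [← Real.rpow_add hM0]; simp
  have hncard : ((AM b α β γ1 γ2 s t M).ncard : ℝ) = (S.card : ℝ) := by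
    rw [Set.ncard_eq_toFinset_card _ hfin]
  rw [hncard]
  calc (S.card : ℝ) = (S.card : ℝ) * M ^ (-κ) * M ^ κ := by
        rw [mul_assoc, hninv, mul_one]
    _ ≤ P1 * P2 * M ^ κ := by
        apply mul_le_mul_of_nonneg_right hreal (by positivity)
    _ = M ^ κ * P1 * P2 := by ring
end

section
/- Let b be a prime, α, β > 1 reals, let 0 < γ_j^{(1)} ≤ 1 and 0 < γ_j^{(2)} ≤ 1 for all j, and let ν > 0 satisfy αν > 1 and βν > 1. Then for all s,t ∈ ℕ the family ((ρ_{α,γ^{(1)}}(k) · r_{β,γ^{(2)}}(l))^ν)_{(k,l) ∈ ℕ^s × ℤ^t} is summable and ∑_{(k,l) ∈ ℕ^s × ℤ^t} (ρ_{α,γ^{(1)}}(k) r_{β,γ^{(2)}}(l))^ν = ∏_{j=1}^s (1 + (γ_j^{(1)})^ν μ(αν)) · ∏_{j=1}^t (1 + 2(γ_j^{(2)})^ν ζ(βν)), where μ(x) = b^x(b−1)/(b^x − b) and ζ is the Riemann zeta function. -/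
open scoped BigOperators

/-- μ(x) = b^x (b−1)/(b^x − b). -/
noncomputable def mu (b : ℕ) (x : ℝ) : ℝ :=
  ((b : ℝ) ^ x * ((b : ℝ) - 1)) / ((b : ℝ) ^ x - (b : ℝ))

/-!
Both decay functions are nonnegative, so the sum of the `ν`-th powers of the products over
`ℕ^s × ℤ^t` factorises into one-dimensional sums. In one dimension, `ρ^ν` equals
`γ^ν b^{-ανm}` on the `(b - 1) b^m` integers `k` with `⌊log_b k⌋ = m`, which turns its sum into the
geometric series `1 + γ^ν (b - 1) / (1 - b^{1-αν}) = 1 + γ^ν μ(αν)`; and `r^ν` takes the value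
`γ^ν (n + 1)^{-βν}` at `±(n + 1)`, giving `1 + 2 γ^ν ζ(βν)`.
-/

open Finset

theorem HasSum.mul_of_nonneg {ι ι' : Type*} {f : ι → ℝ} {g : ι' → ℝ} {a c : ℝ}
    (hf : HasSum f a) (hg : HasSum g c) (hf0 : 0 ≤ f) (hg0 : 0 ≤ g) :
    HasSum (fun p : ι × ι' => f p.1 * g p.2) (a * c) := by
  have hfg := hf.summable.mul_of_nonneg hg.summable hf0 hg0
  rw [← hf.tsum_eq, ← hg.tsum_eq, hf.summable.tsum_mul_tsum hg.summable hfg]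
  exact hfg.hasSum

theorem hasSum_fin_pi_prod_of_nonneg {n : ℕ} {κ : Fin n → Type*} {f : ∀ j, κ j → ℝ}
    {a : Fin n → ℝ} (hf : ∀ j, HasSum (f j) (a j)) (hf0 : ∀ j, 0 ≤ f j) :
    HasSum (fun x : ∀ j, κ j => ∏ j, f j (x j)) (∏ j, a j) := by
  induction n with
  | zero => simp
  | succ n ih =>
    rw [← (Fin.consEquiv κ).hasSum_iff, Fin.prod_univ_succ]
    convert (hf 0).mul_of_nonneg (ih (fun j => hf j.succ) fun j => hf0 j.succ) (hf0 0)
      (fun x => prod_nonneg fun j _ => hf0 j.succ (x j)) with x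
    simp [Fin.consEquiv, Fin.prod_univ_succ]

theorem sum_range_pow_ite_log {M : Type*} [AddCommMonoid M] {b : ℕ} (hb : 0 < b) (g : ℕ → M)
    (N : ℕ) :
    ∑ k ∈ range (b ^ N), (if k = 0 then 0 else g (Nat.log b k)) =
      ∑ m ∈ range N, ((b - 1) * b ^ m) • g m := by
  induction N with
  | zero => simp
  | succ N ih =>
    have hle : b ^ N ≤ b ^ (N + 1) := Nat.pow_le_pow_right hb N.le_succ
    rw [← sum_range_add_sum_Ico _ hle, ih, sum_range_succ]
    congr 1
    have hlog : ∀ k ∈ Ico (b ^ N) (b ^ (N + 1)),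
        (if k = 0 then 0 else g (Nat.log b k)) = g N := by
      intro k hk
      obtain ⟨hk₁, hk₂⟩ := mem_Ico.1 hk
      rw [if_neg (lt_of_lt_of_le (by positivity) hk₁).ne',
        Nat.log_eq_of_pow_le_of_lt_pow hk₁ hk₂]
    rw [sum_congr rfl hlog, sum_const, Nat.card_Ico, pow_succ, ← Nat.mul_sub_one, Nat.mul_comm]

theorem hasSum_ite_pow_log {b : ℕ} (hb : 2 ≤ b) {r : ℝ} (hr : 0 ≤ r) (hbr : b * r < 1) :
    HasSum (fun k : ℕ => if k = 0 then 0 else r ^ Nat.log b k) ((b - 1) / (1 - b * r)) := by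
  set f : ℕ → ℝ := fun k => if k = 0 then 0 else r ^ Nat.log b k
  have hb1 : (1 : ℝ) ≤ b := by exact_mod_cast (by omega : 1 ≤ b)
  have hf0 : ∀ k, 0 ≤ f k := fun k => by dsimp only [f]; split_ifs <;> positivity
  have hgeom : HasSum (fun m : ℕ => ((b : ℝ) - 1) * (b * r) ^ m) ((b - 1) / (1 - b * r)) :=
    (hasSum_geometric_of_lt_one (by positivity) hbr).mul_left _
  have hblock : ∀ N, ∑ k ∈ range (b ^ N), f k = ∑ m ∈ range N, ((b : ℝ) - 1) * (b * r) ^ m := by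
    intro N
    simp only [f, sum_range_pow_ite_log (by omega : 0 < b), nsmul_eq_mul, mul_pow]
    push_cast [Nat.one_le_of_lt hb]
    ring_nf
  have hsum : Summable f := summable_of_sum_range_le hf0 fun N =>
    calc ∑ k ∈ range N, f k ≤ ∑ k ∈ range (b ^ N), f k :=
          sum_le_sum_of_subset_of_nonneg (range_subset_range.2 (Nat.lt_pow_self (by omega)).le)
            fun k _ _ => hf0 k
      _ = _ := hblock N
      _ ≤ _ := sum_le_hasSum _ (fun m _ => by positivity) hgeom
  -- The partial sums up to `b ^ N` are geometric partial sums; as a subsequence of the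
  -- partial sums of a convergent series, they identify its sum.
  refine hsum.hasSum_iff.2 (tendsto_nhds_unique (hsum.hasSum.tendsto_sum_nat.comp
    (tendsto_pow_atTop_atTop_of_one_lt (by omega : 1 < b))) ?_)
  simpa only [Function.comp_def, hblock] using hgeom.tendsto_sum_nat

theorem mu_eq_div_one_sub {b : ℕ} (hb : 0 < b) (x : ℝ) :
    mu b x = (b - 1) / (1 - b * (b : ℝ) ^ (-x)) := by
  have hbx : (b : ℝ) ^ x ≠ 0 := (Real.rpow_pos_of_pos (by positivity) x).ne'
  rw [mu, Real.rpow_neg (by positivity), ← div_eq_mul_inv, one_sub_div hbx, div_div_eq_mul_div,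
    mul_comm]

theorem rho_nonneg (b : ℕ) (α : ℝ) {γ : ℝ} (hγ : 0 ≤ γ) (k : ℕ) : 0 ≤ rho b α γ k := by
  unfold rho; split_ifs <;> positivity

theorem rho_rpow (b : ℕ) (α : ℝ) {γ : ℝ} (hγ : 0 ≤ γ) (ν : ℝ) (k : ℕ) :
    rho b α γ k ^ ν = if k = 0 then 1 else γ ^ ν * ((b : ℝ) ^ (-(α * ν))) ^ Nat.log b k := by
  unfold rho
  split_ifs
  · exact Real.one_rpow ν
  · rw [Real.mul_rpow hγ (by positivity), ← Real.rpow_mul_natCast (by positivity),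
      ← Real.rpow_mul (by positivity)]
    ring_nf

theorem hasSum_rho_rpow {b : ℕ} (hb : 2 ≤ b) (α : ℝ) {γ : ℝ} (hγ : 0 ≤ γ) {ν : ℝ}
    (hαν : 1 < α * ν) :
    HasSum (fun k => rho b α γ k ^ ν) (1 + γ ^ ν * mu b (α * ν)) := by
  have hb0 : (0 : ℝ) < b := by positivity
  have hbr : (b : ℝ) * (b : ℝ) ^ (-(α * ν)) < 1 := by
    rw [← Real.rpow_one_add' hb0.le (by linarith)]
    exact Real.rpow_lt_one_of_one_lt_of_neg (by exact_mod_cast hb) (by linarith)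
  rw [mu_eq_div_one_sub (by omega)]
  convert (hasSum_ite_eq 0 (1 : ℝ)).add
    ((hasSum_ite_pow_log hb (by positivity) hbr).mul_left (γ ^ ν)) using 1
  ext k
  rw [rho_rpow b α hγ]
  split_ifs <;> simp

theorem hasSum_zetaR {x : ℝ} (hx : 1 < x) :
    HasSum (fun n : ℕ => ((n : ℝ) + 1) ^ (-x)) (zetaR x) := by
  have hsum : Summable (fun n : ℕ => ((n : ℝ) + 1) ^ (-x)) := by
    refine ((summable_nat_add_iff 1).2 (Real.summable_nat_rpow_inv.2 hx)).congr fun n => ?_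
    push_cast
    rw [Real.rpow_neg (by positivity)]
  have hcast : ∀ n : ℕ, 1 / ((n : ℂ) + 1) ^ (x : ℂ) = ((((n : ℝ) + 1) ^ (-x) : ℝ) : ℂ) := by
    intro n
    rw [Real.rpow_neg (by positivity), Complex.ofReal_inv, Complex.ofReal_cpow (by positivity),
      one_div]
    push_cast
    rfl
  rw [zetaR, zeta_eq_tsum_one_div_nat_add_one_cpow (by simpa using hx), tsum_congr hcast,
    ← Complex.ofReal_tsum, Complex.ofReal_re]
  exact hsum.hasSum

theorem rK_nonneg (β : ℝ) {γ : ℝ} (hγ : 0 ≤ γ) (l : ℤ) : 0 ≤ rK β γ l := by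
  unfold rK; split_ifs <;> positivity

theorem rK_rpow_of_ne_zero (β : ℝ) {γ : ℝ} (hγ : 0 ≤ γ) (ν : ℝ) {l : ℤ} (hl : l ≠ 0) :
    rK β γ l ^ ν = γ ^ ν * |(l : ℝ)| ^ (-(β * ν)) := by
  rw [rK, if_neg hl, Real.mul_rpow hγ (by positivity), ← Real.rpow_mul (abs_nonneg _)]
  ring_nf

theorem hasSum_rK_rpow (β : ℝ) {γ : ℝ} (hγ : 0 ≤ γ) {ν : ℝ} (hβν : 1 < β * ν) :
    HasSum (fun l => rK β γ l ^ ν) (1 + 2 * γ ^ ν * zetaR (β * ν)) := by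
  have hside : HasSum (fun n : ℕ => γ ^ ν * ((n : ℝ) + 1) ^ (-(β * ν))) (γ ^ ν * zetaR (β * ν)) :=
    (hasSum_zetaR hβν).mul_left _
  have hpos : HasSum (fun n : ℕ => rK β γ (n + 1) ^ ν) (γ ^ ν * zetaR (β * ν)) := by
    refine hside.congr_fun fun n => ?_
    rw [rK_rpow_of_ne_zero β hγ ν (by omega)]
    push_cast
    rw [abs_of_pos (by positivity)]
  have hneg : HasSum (fun n : ℕ => rK β γ (-(n + 1)) ^ ν) (γ ^ ν * zetaR (β * ν)) := by
    refine hside.congr_fun fun n => ?_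
    rw [rK_rpow_of_ne_zero β hγ ν (by omega)]
    push_cast
    rw [abs_neg, abs_of_pos (by positivity)]
  have hzero : rK β γ 0 ^ ν = 1 := by rw [rK, if_pos rfl, Real.one_rpow]
  convert HasSum.of_add_one_of_neg_add_one (f := fun l => rK β γ l ^ ν) hpos hneg using 1
  rw [hzero]
  ring

theorem stmt_5_general (b : ℕ) (hb : b.Prime) (α β : ℝ)
    (γ1 γ2 : ℕ → ℝ) (hγ1 : ∀ j, 0 < γ1 j ∧ γ1 j ≤ 1) (hγ2 : ∀ j, 0 < γ2 j ∧ γ2 j ≤ 1)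
    (ν : ℝ) (hαν : 1 < α * ν) (hβν : 1 < β * ν) (s t : ℕ) :
    Summable (fun p : (Fin s → ℕ) × (Fin t → ℤ) =>
        ((∏ j : Fin s, rho b α (γ1 j) (p.1 j)) * (∏ j : Fin t, rK β (γ2 j) (p.2 j))) ^ ν) ∧
      ∑' p : (Fin s → ℕ) × (Fin t → ℤ),
          ((∏ j : Fin s, rho b α (γ1 j) (p.1 j)) * (∏ j : Fin t, rK β (γ2 j) (p.2 j))) ^ ν =
        (∏ j : Fin s, (1 + (γ1 j) ^ ν * mu b (α * ν))) *
          ∏ j : Fin t, (1 + 2 * (γ2 j) ^ ν * zetaR (β * ν)) := by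
  have hρ0 (j : Fin s) k : 0 ≤ rho b α (γ1 j) k := rho_nonneg b α (hγ1 j).1.le k
  have hr0 (j : Fin t) l : 0 ≤ rK β (γ2 j) l := rK_nonneg β (hγ2 j).1.le l
  have hWalsh := hasSum_fin_pi_prod_of_nonneg (n := s)
    (fun j => hasSum_rho_rpow hb.two_le α (hγ1 j).1.le hαν) fun j k => Real.rpow_nonneg (hρ0 j k) ν
  have hKorobov := hasSum_fin_pi_prod_of_nonneg (n := t)
    (fun j => hasSum_rK_rpow β (hγ2 j).1.le hβν) fun j l => Real.rpow_nonneg (hr0 j l) ν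
  have hsum := hWalsh.mul_of_nonneg hKorobov
    (fun x => prod_nonneg fun j _ => Real.rpow_nonneg (hρ0 j _) ν)
    (fun y => prod_nonneg fun j _ => Real.rpow_nonneg (hr0 j _) ν)
  refine (fun h : HasSum _ _ => ⟨h.summable, h.tsum_eq⟩) (hsum.congr_fun fun p => ?_)
  rw [Real.mul_rpow (prod_nonneg fun j _ => hρ0 j _) (prod_nonneg fun j _ => hr0 j _),
    ← Real.finsetProd_rpow _ _ (fun j _ => hρ0 j _),
    ← Real.finsetProd_rpow _ _ (fun j _ => hr0 j _)]

theorem stmt_5 (b : ℕ) (hb : b.Prime) (α β : ℝ) (hα : 1 < α) (hβ : 1 < β)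
    (γ1 γ2 : ℕ → ℝ) (hγ1 : ∀ j, 0 < γ1 j ∧ γ1 j ≤ 1) (hγ2 : ∀ j, 0 < γ2 j ∧ γ2 j ≤ 1)
    (ν : ℝ) (hν : 0 < ν) (hαν : 1 < α * ν) (hβν : 1 < β * ν) (s t : ℕ) :
    Summable (fun p : (Fin s → ℕ) × (Fin t → ℤ) =>
        ((∏ j : Fin s, rho b α (γ1 j) (p.1 j)) * (∏ j : Fin t, rK β (γ2 j) (p.2 j))) ^ ν) ∧
      ∑' p : (Fin s → ℕ) × (Fin t → ℤ),
          ((∏ j : Fin s, rho b α (γ1 j) (p.1 j)) * (∏ j : Fin t, rK β (γ2 j) (p.2 j))) ^ ν =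
        (∏ j : Fin s, (1 + (γ1 j) ^ ν * mu b (α * ν))) *
          ∏ j : Fin t, (1 + 2 * (γ2 j) ^ ν * zetaR (β * ν)) :=
  stmt_5_general b hb α β γ1 γ2 hγ1 hγ2 ν hαν hβν s t
end
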